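/- Let S_N(t) = ⟨Ω| e^{iHt} σ^x_1 e^{−iHt} |Ω⟩, where |Ω⟩ = 2^{−N/2}(1,1)ᵀ^{⊗N} is the all-x-polarized state and H the periodic XX Hamiltonian on N sites. Then for any commensurate Q, ⟨σ^x_n(t)⟩_Q = S_N(t cos Q) cos(Qn) and ⟨σ^y_n(t)⟩_Q = S_N(t cos Q) sin(Qn). -/

import Mathlib

noncomputable section
open Matrix Complex BigOperators Finset

/-- Pauli x matrix. -/
def pX : Matrix (Fin 2) (Fin 2) ℂ := !![0, 1; 1, 0]
/-- Pauli y matrix. -/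
def pY : Matrix (Fin 2) (Fin 2) ℂ := !![0, -Complex.I; Complex.I, 0]
/-- Pauli z matrix. -/
def pZ : Matrix (Fin 2) (Fin 2) ℂ := !![1, 0; 0, -1]
/-- Spin raising operator `σ⁺ = (σ^x + iσ^y)/2`. -/
def sPlus : Matrix (Fin 2) (Fin 2) ℂ := !![0, 1; 0, 0]
/-- Spin lowering operator `σ⁻ = (σ^x − iσ^y)/2`. -/
def sMinus : Matrix (Fin 2) (Fin 2) ℂ := !![0, 0; 1, 0]

/-- The operator acting as `A` on the `n`-th qubit (0-based) and as identity elsewhere. -/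
def site (N : ℕ) (A : Matrix (Fin 2) (Fin 2) ℂ) (n : Fin N) :
    Matrix (Fin N → Fin 2) (Fin N → Fin 2) ℂ :=
  Matrix.of fun s t => ∏ j : Fin N, if j = n then A (s j) (t j) else if s j = t j then 1 else 0

/-- The periodic XX Hamiltonian `H = Σ_n (σ^x_n σ^x_{n+1} + σ^y_n σ^y_{n+1})`. -/
def Hxx (N : ℕ) [NeZero N] : Matrix (Fin N → Fin 2) (Fin N → Fin 2) ℂ :=
  ∑ n : Fin N, (site N pX n * site N pX (n + 1) + site N pY n * site N pY (n + 1))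

/-- The time-evolution operator `e^{iHt}` of the XX model. -/
def Ut (N : ℕ) [NeZero N] (t : ℝ) : Matrix (Fin N → Fin 2) (Fin N → Fin 2) ℂ :=
  NormedSpace.exp ((Complex.I * (t : ℂ)) • Hxx N)

/-- Quantum-mechanical expectation value `⟨ψ| A |ψ⟩`. -/
def expval (N : ℕ) (ψ : (Fin N → Fin 2) → ℂ)
    (A : Matrix (Fin N → Fin 2) (Fin N → Fin 2) ℂ) : ℂ :=
  dotProduct (star ψ) (A.mulVec ψ)

/-- The transverse spin-helix state `|Ψ_Q⟩ = 2^{−N/2} ⊗_{n=1}^{N} (1, e^{inQ})ᵀ`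
(0-based site `j` corresponds to `n = j+1`). -/
def helix (N : ℕ) (Q : ℝ) : (Fin N → Fin 2) → ℂ := fun s =>
  ∏ j : Fin N, ((Real.sqrt 2 : ℂ))⁻¹ *
    (if s j = 0 then 1 else Complex.exp (Complex.I * Q * ((j : ℕ) + 1)))

/-- `S_N(t) = ⟨Ω| e^{iHt} σ^x_1 e^{−iHt} |Ω⟩` where `|Ω⟩ = 2^{−N/2}(1,1)ᵀ^{⊗N}` is the
all-x-polarized state (`|Ω⟩ = |Ψ_0⟩` is the helix with `Q = 0`). -/
def SN (N : ℕ) [NeZero N] (t : ℝ) : ℂ :=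
  expval N (helix N 0) (Ut N t * site N pX 0 * Ut N (-t))

/-!
The twist `W = ⊗ⱼ diag(1, e^{iQ(j+1)})` maps `|Ω⟩` to `|Ψ_Q⟩`, so `⟨A⟩_Q = ⟨Ω| W†AW |Ω⟩`.
Writing `H = 2(H₊₋ + H₋₊)` with the hopping terms `H₊₋ = Σ σ⁺ₙσ⁻ₙ₊₁` and `H₋₊ = Σ σ⁻ₙσ⁺ₙ₊₁`,
the twist multiplies every bond of `H₊₋` by `e^{-iQ}` and of `H₋₊` by `e^{iQ}` (around the ring
this needs `e^{iQN} = 1`), so `W†HW = cos Q · H - sin Q · J` with the spin current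
`J = 2i(H₊₋ - H₋₊)`. The commutator `[H₊₋, H₋₊]` telescopes to zero, so `J` commutes with `H`,
and `J` annihilates `|Ω⟩` from both sides; hence the `J`-part of the twisted evolution drops
out and only the rescaled time `t cos Q` survives. Finally `W†σˣₙW = cos(Qn) σˣₙ - sin(Qn) σʸₙ`:
translation invariance turns `⟨σˣₙ(t)⟩_Ω` into `S_N(t)`, and the global spin flip `⊗ σˣ`, which
fixes `H` and `|Ω⟩` but reverses `σʸ`, forces `⟨σʸₙ(t)⟩_Ω = 0`.
-/

namespace Matrix

section PiKron

variable {ι d R : Type*} [Fintype ι] [CommSemiring R]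

def piKron (F : ι → Matrix d d R) : Matrix (ι → d) (ι → d) R :=
  of fun s t => ∏ i, F i (s i) (t i)

@[simp]
theorem piKron_apply (F : ι → Matrix d d R) (s t : ι → d) :
    piKron F s t = ∏ i, F i (s i) (t i) := rfl

theorem conjTranspose_piKron [StarRing R] (F : ι → Matrix d d R) :
    (piKron F)ᴴ = piKron fun i => (F i)ᴴ := by
  ext s t
  simp [conjTranspose_apply, star_prod]

theorem piKron_diagonal [DecidableEq ι] [DecidableEq d] (p : ι → d → R) :
    piKron (fun i => diagonal (p i)) = diagonal fun s => ∏ i, p i (s i) := by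
  ext s t
  by_cases h : s = t
  · subst h; simp
  · obtain ⟨i, hi⟩ := Function.ne_iff.mp h
    rw [piKron_apply, diagonal_apply_ne _ h]
    exact Finset.prod_eq_zero (Finset.mem_univ i) (diagonal_apply_ne _ hi)

theorem piKron_one [DecidableEq ι] [DecidableEq d] : piKron (1 : ι → Matrix d d R) = 1 := by
  have h := piKron_diagonal (ι := ι) (d := d) fun _ _ => (1 : R)
  simp only [diagonal_one, Finset.prod_const_one] at h
  exact h

variable [DecidableEq ι] [Fintype d]

theorem piKron_mul_piKron (F G : ι → Matrix d d R) : piKron F * piKron G = piKron (F * G) := by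
  ext s t
  simp only [mul_apply, piKron_apply, Pi.mul_apply, Fintype.prod_sum]
  exact Fintype.sum_congr _ _ fun u => Finset.prod_mul_distrib.symm

theorem piKron_mulVec_const {F : ι → Matrix d d R} (hF : ∀ i x, ∑ y, F i x y = 1) (c : R) :
    piKron F *ᵥ (fun _ => c) = fun _ => c := by
  funext s
  simp only [mulVec, dotProduct, piKron_apply, ← Finset.sum_mul, ← Fintype.prod_sum, hF,
    Finset.prod_const_one, one_mul]

theorem const_vecMul_piKron {F : ι → Matrix d d R} (hF : ∀ i y, ∑ x, F i x y = 1) (c : R) :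
    (fun _ => c) ᵥ* piKron F = fun _ => c := by
  funext t
  simp only [vecMul, dotProduct, piKron_apply, ← Finset.mul_sum]
  rw [← Fintype.prod_sum fun i x => F i x (t i)]
  simp only [hF, Finset.prod_const_one, mul_one]

end PiKron

section Expectation

variable {m R : Type*} [Fintype m] [CommRing R]

theorem star_mulVec_dotProduct [StarRing R] (U A : Matrix m m R) (ψ : m → R) :
    star (U *ᵥ ψ) ⬝ᵥ (A *ᵥ (U *ᵥ ψ)) = star ψ ⬝ᵥ ((Uᴴ * A * U) *ᵥ ψ) := by
  rw [star_mulVec, ← dotProduct_mulVec, mulVec_mulVec, mulVec_mulVec, mul_assoc]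

theorem dotProduct_submatrix_mulVec (e : m ≃ m) (A : Matrix m m R) {u v : m → R}
    (hu : u ∘ e = u) (hv : v ∘ e = v) :
    u ⬝ᵥ (A.submatrix e e *ᵥ v) = u ⬝ᵥ (A *ᵥ v) := by
  have symm_invariant : ∀ w : m → R, w ∘ e = w → w ∘ e.symm = w := fun w hw => by
    funext s; simpa using (congrFun hw (e.symm s)).symm
  rw [submatrix_mulVec_equiv, symm_invariant v hv, ← comp_equiv_symm_dotProduct,
    symm_invariant u hu]

theorem dotProduct_mulVec_eq_zero_of_conj_eq_neg [StarRing R] [IsAddTorsionFree R]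
    {G A : Matrix m m R} {u v : m → R}
    (hu : u ᵥ* G = u) (hv : Gᴴ *ᵥ v = v) (hA : G * A * Gᴴ = -A) :
    u ⬝ᵥ (A *ᵥ v) = 0 := by
  refine self_eq_neg.mp ?_
  conv_lhs => rw [← hu, ← hv, ← dotProduct_mulVec, mulVec_mulVec, mulVec_mulVec, hA]
  rw [neg_mulVec, dotProduct_neg]

end Expectation

section Exponential

open NormedSpace

variable {m 𝕂 : Type*} [Fintype m] [DecidableEq m] [RCLike 𝕂]

theorem exp_mulVec_of_mulVec_eq_zero {A : Matrix m m 𝕂} {v : m → 𝕂} (h : A *ᵥ v = 0) :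
    exp A *ᵥ v = v := by
  have hA : ∀ k, (A ^ (k + 1)) *ᵥ v = 0 := fun k => by
    rw [pow_succ, ← mulVec_mulVec, h, mulVec_zero]
  have hsum : HasSum (fun k : ℕ => ((k.factorial : 𝕂)⁻¹ • A ^ k) *ᵥ v) (exp A *ᵥ v) :=
    open scoped Norms.Operator in
    (exp_series_hasSum_exp' (𝕂 := 𝕂) A).map (mulVec.addMonoidHomLeft v)
      (continuous_id.matrix_mulVec continuous_const)
  refine hsum.unique ?_
  convert hasSum_ite_eq 0 v using 1
  funext k
  rcases k with _ | k
  · simp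
  · simp [smul_mulVec, hA]

theorem vecMul_exp_of_vecMul_eq_zero {A : Matrix m m 𝕂} {v : m → 𝕂} (h : v ᵥ* A = 0) :
    v ᵥ* exp A = v := by
  rw [← mulVec_transpose, ← exp_transpose]
  exact exp_mulVec_of_mulVec_eq_zero (by rw [mulVec_transpose, h])

theorem exp_add_mulVec {A B : Matrix m m 𝕂} {v : m → 𝕂} (hAB : Commute A B)
    (hB : B *ᵥ v = 0) : exp (A + B) *ᵥ v = exp A *ᵥ v := by
  rw [exp_add_of_commute A B hAB, ← mulVec_mulVec, exp_mulVec_of_mulVec_eq_zero hB]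

theorem vecMul_exp_add {A B : Matrix m m 𝕂} {v : m → 𝕂} (hAB : Commute A B)
    (hB : v ᵥ* B = 0) : v ᵥ* exp (A + B) = v ᵥ* exp A := by
  rw [add_comm, exp_add_of_commute B A hAB.symm, ← vecMul_vecMul,
    vecMul_exp_of_vecMul_eq_zero hB]

theorem exp_submatrix (e : m ≃ m) (A : Matrix m m 𝕂) :
    exp (A.submatrix e e) = (exp A).submatrix e e :=
  open scoped Norms.Operator in
  (map_exp (reindexAlgEquiv 𝕂 𝕂 e.symm) (continuous_id.matrix_reindex _ _) A).symm

theorem conjStarAlgAut_exp (u : unitary (Matrix m m 𝕂)) (A : Matrix m m 𝕂) :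
    Unitary.conjStarAlgAut 𝕂 _ u (exp A) = exp (Unitary.conjStarAlgAut 𝕂 _ u A) := by
  simpa using (exp_units_conj (Unitary.toUnits u) A).symm

end Exponential

end Matrix

theorem mul_mul_self_eq_zero_of_commute {R : Type*} [Semiring R] {a x : R} (ha : a * a = 0)
    (h : Commute a x) : a * x * a = 0 := by
  rw [mul_assoc, ← h.eq, ← mul_assoc, ha, zero_mul]

theorem Fin.add_one_ne_self {N : ℕ} [NeZero N] (hN : 1 < N) (n : Fin N) : n + 1 ≠ n := by
  intro h
  have h1 := congrArg Fin.val (add_eq_left.mp h)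
  rw [Fin.val_one', Nat.mod_eq_of_lt hN] at h1
  exact one_ne_zero h1

theorem Fin.sum_comp_add_one {N : ℕ} [NeZero N] {M : Type*} [AddCommMonoid M] (f : Fin N → M) :
    ∑ n, f (n + 1) = ∑ n, f n :=
  Equiv.sum_comp (Equiv.addRight (1 : Fin N)) f


section Site

variable {N : ℕ}

theorem site_eq_piKron (A : Matrix (Fin 2) (Fin 2) ℂ) (n : Fin N) :
    site N A n = piKron (Function.update 1 n A) := by
  ext s t
  simp only [site, of_apply, piKron_apply, Function.update_apply]
  refine Finset.prod_congr rfl fun j _ => ?_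
  split_ifs <;> simp [one_apply, *]

theorem site_apply (A : Matrix (Fin 2) (Fin 2) ℂ) (n : Fin N) (s t : Fin N → Fin 2) :
    site N A n s t = A (s n) (t n) * ∏ j ∈ univ.erase n, if s j = t j then 1 else 0 := by
  rw [site, of_apply, ← Finset.mul_prod_erase _ _ (Finset.mem_univ n), if_pos rfl]
  congr 1
  exact Finset.prod_congr rfl fun j hj => if_neg (Finset.ne_of_mem_erase hj)

theorem site_add (A B : Matrix (Fin 2) (Fin 2) ℂ) (n : Fin N) :
    site N (A + B) n = site N A n + site N B n := by
  ext s t; simp only [site_apply, Matrix.add_apply]; ring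

theorem site_sub (A B : Matrix (Fin 2) (Fin 2) ℂ) (n : Fin N) :
    site N (A - B) n = site N A n - site N B n := by
  ext s t; simp only [site_apply, Matrix.sub_apply]; ring

theorem site_smul (c : ℂ) (A : Matrix (Fin 2) (Fin 2) ℂ) (n : Fin N) :
    site N (c • A) n = c • site N A n := by
  ext s t; simp only [site_apply, Matrix.smul_apply, smul_eq_mul]; ring

theorem site_neg (A : Matrix (Fin 2) (Fin 2) ℂ) (n : Fin N) : site N (-A) n = -site N A n := by
  simpa using site_smul (-1) A n

theorem site_zero (n : Fin N) : site N 0 n = 0 := by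
  simpa using site_smul 0 0 n

theorem site_one (n : Fin N) : site N 1 n = 1 := by
  rw [site_eq_piKron, Function.update_one, piKron_one]

theorem site_mul_site (A B : Matrix (Fin 2) (Fin 2) ℂ) (n : Fin N) :
    site N A n * site N B n = site N (A * B) n := by
  rw [site_eq_piKron, site_eq_piKron, piKron_mul_piKron, ← Function.update_mul, one_mul,
    site_eq_piKron]

theorem commute_site_site {n m : Fin N} (h : n ≠ m) (A B : Matrix (Fin 2) (Fin 2) ℂ) :
    Commute (site N A n) (site N B m) := by
  rw [site_eq_piKron, site_eq_piKron, Commute, SemiconjBy, piKron_mul_piKron, piKron_mul_piKron]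
  congr 1
  funext j
  simp only [Pi.mul_apply, Function.update_apply]
  split_ifs with h1 h2 <;> simp_all

theorem piKron_mul_site_mul_piKron {F G : Fin N → Matrix (Fin 2) (Fin 2) ℂ}
    (hGF : ∀ j, G j * F j = 1) (A : Matrix (Fin 2) (Fin 2) ℂ) (n : Fin N) :
    piKron G * site N A n * piKron F = site N (G n * A * F n) n := by
  rw [site_eq_piKron, piKron_mul_piKron, piKron_mul_piKron, site_eq_piKron]
  congr 1
  funext j
  rcases eq_or_ne j n with rfl | h
  · simp
  · simp [Function.update_of_ne h, hGF]

theorem site_mulVec_const {A : Matrix (Fin 2) (Fin 2) ℂ} (hA : ∀ x, ∑ y, A x y = 1)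
    (n : Fin N) (c : ℂ) : site N A n *ᵥ (fun _ => c) = fun _ => c := by
  rw [site_eq_piKron]
  refine piKron_mulVec_const (fun j x => ?_) c
  rcases eq_or_ne j n with rfl | h
  · simpa using hA x
  · simp [Function.update_of_ne h, one_apply]

theorem const_vecMul_site {A : Matrix (Fin 2) (Fin 2) ℂ} (hA : ∀ y, ∑ x, A x y = 1)
    (n : Fin N) (c : ℂ) : (fun _ => c) ᵥ* site N A n = fun _ => c := by
  rw [site_eq_piKron]
  refine const_vecMul_piKron (fun j y => ?_) c
  rcases eq_or_ne j n with rfl | h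
  · simpa using hA y
  · simp [Function.update_of_ne h, one_apply]

theorem submatrix_site (e : Fin N ≃ Fin N) (A : Matrix (Fin 2) (Fin 2) ℂ) (n : Fin N) :
    (site N A n).submatrix (e.arrowCongr (Equiv.refl _)) (e.arrowCongr (Equiv.refl _))
      = site N A (e.symm n) := by
  ext s t
  simp only [site, submatrix_apply, of_apply, Equiv.arrowCongr_apply, Equiv.coe_refl,
    Function.comp_apply]
  rw [← e.prod_comp]
  simp [← Equiv.eq_symm_apply]

end Site

section Pauli

theorem pX_eq_sPlus_add_sMinus : pX = sPlus + sMinus := by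
  ext i j; fin_cases i <;> fin_cases j <;> simp [pX, sPlus, sMinus]

theorem pY_eq_I_smul_sMinus_sub : pY = I • sMinus - I • sPlus := by
  ext i j; fin_cases i <;> fin_cases j <;> simp [pY, sPlus, sMinus]

theorem sPlus_mul_sPlus : sPlus * sPlus = 0 := by
  ext i j; fin_cases i <;> fin_cases j <;> simp [sPlus, mul_apply]

theorem sMinus_mul_sMinus : sMinus * sMinus = 0 := by
  ext i j; fin_cases i <;> fin_cases j <;> simp [sMinus, mul_apply]

theorem sPlus_mul_sMinus : sPlus * sMinus = (1 / 2 : ℂ) • (1 + pZ) := by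
  ext i j; fin_cases i <;> fin_cases j <;> norm_num [sPlus, sMinus, pZ, mul_apply]

theorem sMinus_mul_sPlus : sMinus * sPlus = (1 / 2 : ℂ) • (1 - pZ) := by
  ext i j; fin_cases i <;> fin_cases j <;> norm_num [sPlus, sMinus, pZ, mul_apply]

theorem pX_mul_pX : pX * pX = 1 := by
  ext i j; fin_cases i <;> fin_cases j <;> simp [pX, mul_apply]

theorem pX_mul_pY_mul_pX : pX * pY * pX = -pY := by
  ext i j; fin_cases i <;> fin_cases j <;> simp [pX, pY, mul_apply]

theorem conjTranspose_pX : pXᴴ = pX := by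
  ext i j; fin_cases i <;> fin_cases j <;> simp [pX]

theorem sum_pX_apply_left (x : Fin 2) : ∑ y, pX x y = 1 := by
  fin_cases x <;> simp [pX]

theorem sum_pX_apply_right (y : Fin 2) : ∑ x, pX x y = 1 := by
  fin_cases y <;> simp [pX]

end Pauli

section Hopping

variable (N : ℕ) [NeZero N]

def bondPM (n : Fin N) : Matrix (Fin N → Fin 2) (Fin N → Fin 2) ℂ :=
  site N sPlus n * site N sMinus (n + 1)

def bondMP (n : Fin N) : Matrix (Fin N → Fin 2) (Fin N → Fin 2) ℂ :=
  site N sMinus n * site N sPlus (n + 1)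

def Hpm : Matrix (Fin N → Fin 2) (Fin N → Fin 2) ℂ := ∑ n, bondPM N n

def Hmp : Matrix (Fin N → Fin 2) (Fin N → Fin 2) ℂ := ∑ n, bondMP N n

def spinCurrent : Matrix (Fin N → Fin 2) (Fin N → Fin 2) ℂ :=
  ∑ n, (site N pX n * site N pY (n + 1) - site N pY n * site N pX (n + 1))

variable {N}

theorem Hxx_eq_Hpm_add_Hmp : Hxx N = (2 : ℂ) • (Hpm N + Hmp N) := by
  rw [Hxx, Hpm, Hmp, ← Finset.sum_add_distrib, Finset.smul_sum]
  refine Finset.sum_congr rfl fun n _ => ?_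
  simp only [bondPM, bondMP, pX_eq_sPlus_add_sMinus, pY_eq_I_smul_sMinus_sub, site_add, site_sub,
    site_smul, add_mul, mul_add, sub_mul, mul_sub, smul_mul_assoc, mul_smul_comm]
  match_scalars <;> ring_nf <;> norm_num [I_sq]

theorem spinCurrent_eq_Hpm_sub_Hmp : spinCurrent N = (2 * I) • (Hpm N - Hmp N) := by
  rw [spinCurrent, Hpm, Hmp, ← Finset.sum_sub_distrib, Finset.smul_sum]
  refine Finset.sum_congr rfl fun n _ => ?_
  simp only [bondPM, bondMP, pX_eq_sPlus_add_sMinus, pY_eq_I_smul_sMinus_sub, site_add, site_sub,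
    site_smul, add_mul, mul_add, sub_mul, mul_sub, smul_mul_assoc, mul_smul_comm]
  module

theorem bondPM_mul_bondMP_sub (n : Fin N) :
    bondPM N n * bondMP N n - bondMP N n * bondPM N n
      = (1 / 2 : ℂ) • (site N pZ n - site N pZ (n + 1)) := by
  rcases eq_or_ne (n + 1) n with hn | hn
  · simp only [bondPM, bondMP, hn, site_mul_site, ← mul_assoc]
    simp only [mul_assoc sPlus, mul_assoc sMinus, sPlus_mul_sPlus, sMinus_mul_sMinus, mul_zero,
      zero_mul, site_zero, sub_self, smul_zero]
  · rw [bondPM, bondMP, (commute_site_site hn _ _).mul_mul_mul_comm,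
      (commute_site_site hn _ _).mul_mul_mul_comm, site_mul_site, site_mul_site,
      site_mul_site, site_mul_site, sPlus_mul_sMinus, sMinus_mul_sPlus]
    simp only [site_smul, site_add, site_sub, site_one, smul_mul_smul_comm, add_mul, mul_add,
      sub_mul, mul_sub, one_mul, mul_one]
    module

/-- Bonds sharing a site multiply to zero in both orders, because `σ⁺σ⁺ = σ⁻σ⁻ = 0`. -/
theorem commute_bondPM_bondMP {n m : Fin N} (hnm : n ≠ m) :
    Commute (bondPM N n) (bondMP N m) := by
  have hs := Fin.add_one_ne_self (Fin.nontrivial_iff_two_le.mp (nontrivial_of_ne n m hnm))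
  rcases eq_or_ne (m + 1) n with rfl | h1
  · have hc : Commute (site N sPlus (m + 1)) (site N sMinus (m + 1 + 1) * site N sMinus m) :=
      (commute_site_site (hs _).symm _ _).mul_right (commute_site_site hnm _ _)
    refine (?_ : bondPM N (m + 1) * bondMP N m = 0).trans (?_ : 0 = bondMP N m * bondPM N (m + 1))
    · rw [bondPM, bondMP, mul_assoc, ← mul_assoc (site N sMinus _), ← mul_assoc,
        mul_mul_self_eq_zero_of_commute (by rw [site_mul_site, sPlus_mul_sPlus, site_zero]) hc]
    · rw [bondPM, bondMP, mul_assoc, ← mul_assoc (site N sPlus _), site_mul_site, sPlus_mul_sPlus,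
        site_zero, zero_mul, mul_zero]
  rcases eq_or_ne (n + 1) m with rfl | h2
  · have hc : Commute (site N sMinus (n + 1)) (site N sPlus (n + 1 + 1) * site N sPlus n) :=
      (commute_site_site (hs _).symm _ _).mul_right (commute_site_site hnm.symm _ _)
    refine (?_ : bondPM N n * bondMP N (n + 1) = 0).trans (?_ : 0 = bondMP N (n + 1) * bondPM N n)
    · rw [bondPM, bondMP, mul_assoc, ← mul_assoc (site N sMinus _), site_mul_site,
        sMinus_mul_sMinus, site_zero, zero_mul, mul_zero]
    · rw [bondPM, bondMP, mul_assoc, ← mul_assoc (site N sPlus _), ← mul_assoc,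
        mul_mul_self_eq_zero_of_commute (by rw [site_mul_site, sMinus_mul_sMinus, site_zero]) hc]
  have h3 : n + 1 ≠ m + 1 := fun h => hnm (add_right_cancel h)
  exact ((commute_site_site hnm _ _).mul_right (commute_site_site h1.symm _ _)).mul_left
    ((commute_site_site h2 _ _).mul_right (commute_site_site h3 _ _))

theorem commute_Hpm_Hmp : Commute (Hpm N) (Hmp N) := by
  have hdiag : ∀ n, ∑ m, (bondPM N n * bondMP N m - bondMP N m * bondPM N n)
      = (1 / 2 : ℂ) • (site N pZ n - site N pZ (n + 1)) := fun n => by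
    rw [Finset.sum_eq_single n (fun m _ hmn => by rw [(commute_bondPM_bondMP hmn.symm).eq,
      sub_self]) (by simp), bondPM_mul_bondMP_sub]
  rw [Commute, SemiconjBy, ← sub_eq_zero, Hpm, Hmp, Finset.sum_mul_sum, Finset.sum_mul_sum,
    Finset.sum_comm (f := fun m n => bondMP N m * bondPM N n), ← Finset.sum_sub_distrib]
  simp only [← Finset.sum_sub_distrib, hdiag, ← Finset.smul_sum]
  rw [Finset.sum_sub_distrib, Fin.sum_comp_add_one (site N pZ ·), sub_self, smul_zero]

theorem commute_Hxx_spinCurrent : Commute (Hxx N) (spinCurrent N) := by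
  rw [Hxx_eq_Hpm_add_Hmp, spinCurrent_eq_Hpm_sub_Hmp]
  refine Commute.smul_left (Commute.smul_right ?_ _) _
  exact ((Commute.refl _).sub_right commute_Hpm_Hmp).add_left
    (commute_Hpm_Hmp.symm.sub_right (Commute.refl _))

theorem spinCurrent_mulVec_const (hN : 1 < N) (c : ℂ) :
    spinCurrent N *ᵥ (fun _ => c) = 0 := by
  have hXY : ∀ n : Fin N, site N pX n * site N pY (n + 1) = site N pY (n + 1) * site N pX n :=
    fun n => (commute_site_site (Fin.add_one_ne_self hN n).symm _ _).eq
  simp only [spinCurrent, sum_mulVec, sub_mulVec, hXY, ← mulVec_mulVec,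
    site_mulVec_const sum_pX_apply_left, Finset.sum_sub_distrib,
    Fin.sum_comp_add_one (site N pY · *ᵥ fun _ => c), sub_self]

theorem const_vecMul_spinCurrent (hN : 1 < N) (c : ℂ) :
    (fun _ => c) ᵥ* spinCurrent N = 0 := by
  have hYX : ∀ n : Fin N, site N pY n * site N pX (n + 1) = site N pX (n + 1) * site N pY n :=
    fun n => (commute_site_site (Fin.add_one_ne_self hN n).symm _ _).eq
  simp only [spinCurrent, vecMul_sum, vecMul_sub, hYX, ← vecMul_vecMul,
    const_vecMul_site sum_pX_apply_right, Finset.sum_sub_distrib,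
    Fin.sum_comp_add_one ((fun _ => c) ᵥ* site N pY ·), sub_self]

end Hopping

section Expval

variable {N : ℕ} (ψ : (Fin N → Fin 2) → ℂ) (A B : Matrix (Fin N → Fin 2) (Fin N → Fin 2) ℂ)

theorem expval_add : expval N ψ (A + B) = expval N ψ A + expval N ψ B := by
  simp only [expval, add_mulVec, dotProduct_add]

theorem expval_sub : expval N ψ (A - B) = expval N ψ A - expval N ψ B := by
  simp only [expval, sub_mulVec, dotProduct_sub]

theorem expval_smul (c : ℂ) : expval N ψ (c • A) = c * expval N ψ A := by
  simp only [expval, smul_mulVec, dotProduct_smul, smul_eq_mul]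

end Expval

section QubitTwist

def qubitTwist (θ : ℝ) : Matrix (Fin 2) (Fin 2) ℂ := diagonal ![1, exp (θ * I)]

theorem conjTranspose_qubitTwist (θ : ℝ) : (qubitTwist θ)ᴴ = qubitTwist (-θ) := by
  ext i j; fin_cases i <;> fin_cases j <;> simp [qubitTwist, ← exp_conj]

theorem qubitTwist_mul_qubitTwist (θ φ : ℝ) :
    qubitTwist θ * qubitTwist φ = qubitTwist (θ + φ) := by
  ext i j; fin_cases i <;> fin_cases j <;> simp [qubitTwist, ← exp_add, add_mul]

theorem qubitTwist_zero : qubitTwist 0 = 1 := by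
  ext i j; fin_cases i <;> fin_cases j <;> simp [qubitTwist]

theorem qubitTwist_conj_sPlus (θ : ℝ) :
    qubitTwist (-θ) * sPlus * qubitTwist θ = exp (θ * I) • sPlus := by
  ext i j; fin_cases i <;> fin_cases j <;> simp [qubitTwist, sPlus, mul_apply]

theorem qubitTwist_conj_sMinus (θ : ℝ) :
    qubitTwist (-θ) * sMinus * qubitTwist θ = exp (-(θ * I)) • sMinus := by
  ext i j; fin_cases i <;> fin_cases j <;> simp [qubitTwist, sMinus, mul_apply]

theorem qubitTwist_conj_pX (θ : ℝ) :
    qubitTwist (-θ) * pX * qubitTwist θ = (Real.cos θ : ℂ) • pX - (Real.sin θ : ℂ) • pY := by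
  ext i j; fin_cases i <;> fin_cases j <;>
    simp [qubitTwist, pX, pY, mul_apply, exp_mul_I, ← neg_mul] <;> ring

theorem qubitTwist_conj_pY (θ : ℝ) :
    qubitTwist (-θ) * pY * qubitTwist θ = (Real.cos θ : ℂ) • pY + (Real.sin θ : ℂ) • pX := by
  ext i j; fin_cases i <;> fin_cases j <;>
    simp [qubitTwist, pX, pY, mul_apply, exp_mul_I, ← neg_mul] <;> ring_nf <;> simp [I_sq]

end QubitTwist

section Twist

def twist (N : ℕ) (Q : ℝ) : Matrix (Fin N → Fin 2) (Fin N → Fin 2) ℂ :=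
  piKron fun j : Fin N => qubitTwist (Q * ((j : ℕ) + 1))

variable {N : ℕ} (Q : ℝ)

theorem twist_mem_unitary :
    twist N Q ∈ unitary (Matrix (Fin N → Fin 2) (Fin N → Fin 2) ℂ) := by
  rw [← unitaryGroup, mem_unitaryGroup_iff, star_eq_conjTranspose, twist, conjTranspose_piKron,
    piKron_mul_piKron]
  simp only [conjTranspose_qubitTwist, Pi.mul_def, qubitTwist_mul_qubitTwist, add_neg_cancel,
    qubitTwist_zero]
  exact piKron_one

theorem helix_eq_twist_mulVec : helix N Q = twist N Q *ᵥ helix N 0 := by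
  funext s
  simp only [twist, qubitTwist]
  rw [piKron_diagonal, mulVec_diagonal, helix, helix, ← Finset.prod_mul_distrib]
  refine Finset.prod_congr rfl fun j _ => ?_
  generalize s j = x
  fin_cases x
  · simp
  · simp only [Fin.mk_one, one_ne_zero, if_false, ofReal_zero, mul_zero, zero_mul, exp_zero]
    push_cast
    ring_nf

theorem helix_zero : helix N 0 = fun _ => ((Real.sqrt 2 : ℂ))⁻¹ ^ N := by
  funext s
  simp [helix]

theorem star_helix_zero : star (helix N 0) = helix N 0 := by
  rw [helix_zero]
  funext s
  simp [← ofReal_pow, ← ofReal_inv]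

def untwist (N : ℕ) (Q : ℝ) :
    Matrix (Fin N → Fin 2) (Fin N → Fin 2) ℂ ≃⋆ₐ[ℂ] Matrix (Fin N → Fin 2) (Fin N → Fin 2) ℂ :=
  Unitary.conjStarAlgAut ℂ _ (star ⟨twist N Q, twist_mem_unitary Q⟩)

theorem untwist_apply (A : Matrix (Fin N → Fin 2) (Fin N → Fin 2) ℂ) :
    untwist N Q A = (twist N Q)ᴴ * A * twist N Q := by
  simp [untwist, star_eq_conjTranspose]

theorem untwist_exp (A : Matrix (Fin N → Fin 2) (Fin N → Fin 2) ℂ) :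
    untwist N Q (NormedSpace.exp A) = NormedSpace.exp (untwist N Q A) :=
  conjStarAlgAut_exp _ A

theorem untwist_site (A : Matrix (Fin 2) (Fin 2) ℂ) (n : Fin N) :
    untwist N Q (site N A n)
      = site N (qubitTwist (-(Q * ((n : ℕ) + 1))) * A * qubitTwist (Q * ((n : ℕ) + 1))) n := by
  rw [untwist_apply, twist, conjTranspose_piKron]
  simp only [conjTranspose_qubitTwist]
  exact piKron_mul_site_mul_piKron (fun j => by
    rw [qubitTwist_mul_qubitTwist, neg_add_cancel, qubitTwist_zero]) A n

theorem untwist_site_pX (n : Fin N) :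
    untwist N Q (site N pX n) = (Real.cos (Q * ((n : ℕ) + 1)) : ℂ) • site N pX n
      - (Real.sin (Q * ((n : ℕ) + 1)) : ℂ) • site N pY n := by
  rw [untwist_site, qubitTwist_conj_pX, site_sub, site_smul, site_smul]

theorem untwist_site_pY (n : Fin N) :
    untwist N Q (site N pY n) = (Real.cos (Q * ((n : ℕ) + 1)) : ℂ) • site N pY n
      + (Real.sin (Q * ((n : ℕ) + 1)) : ℂ) • site N pX n := by
  rw [untwist_site, qubitTwist_conj_pY, site_add, site_smul, site_smul]

variable [NeZero N] {Q}

theorem exp_twistAngle_add_one (hQ : exp (I * Q * N) = 1) (n : Fin N) :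
    exp (↑(Q * (((n + 1 : Fin N) : ℕ) + 1)) * I)
      = exp (↑(Q * ((n : ℕ) + 1)) * I) * exp (Q * I) := by
  have hmod : ∀ k : ℕ, exp (↑(Q * ((k % N : ℕ) : ℝ)) * I) = exp (↑(Q * k) * I) := fun k => by
    conv_rhs => rw [← Nat.mod_add_div k N]
    have : (↑(Q * ((k % N + N * (k / N) : ℕ) : ℝ)) * I : ℂ)
        = ↑(Q * ((k % N : ℕ) : ℝ)) * I + ((k / N : ℕ) : ℂ) * (I * Q * N) := by push_cast; ring
    rw [this, exp_add, exp_nat_mul, hQ, one_pow, mul_one]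
  rw [Fin.val_add, Fin.val_one', Nat.add_mod_mod, ← exp_add]
  have h := hmod ((n : ℕ) + 1)
  push_cast at h ⊢
  rw [exp_add, ← h, ← exp_add]
  ring_nf

theorem untwist_bondPM (hQ : exp (I * Q * N) = 1) (n : Fin N) :
    untwist N Q (bondPM N n) = exp (-(Q * I)) • bondPM N n := by
  rw [bondPM, map_mul, untwist_site, untwist_site, qubitTwist_conj_sPlus, qubitTwist_conj_sMinus,
    site_smul, site_smul, smul_mul_smul_comm, exp_neg, exp_twistAngle_add_one hQ, mul_inv,
    mul_inv_cancel_left₀ (exp_ne_zero _), exp_neg]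

theorem untwist_bondMP (hQ : exp (I * Q * N) = 1) (n : Fin N) :
    untwist N Q (bondMP N n) = exp (Q * I) • bondMP N n := by
  rw [bondMP, map_mul, untwist_site, untwist_site, qubitTwist_conj_sPlus, qubitTwist_conj_sMinus,
    site_smul, site_smul, smul_mul_smul_comm, exp_neg, exp_twistAngle_add_one hQ,
    inv_mul_cancel_left₀ (exp_ne_zero _)]

theorem untwist_Hxx (hQ : exp (I * Q * N) = 1) :
    untwist N Q (Hxx N) = (Real.cos Q : ℂ) • Hxx N - (Real.sin Q : ℂ) • spinCurrent N := by
  rw [Hxx_eq_Hpm_add_Hmp, spinCurrent_eq_Hpm_sub_Hmp, map_smul, map_add, Hpm, Hmp, map_sum,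
    map_sum]
  simp only [untwist_bondPM hQ, untwist_bondMP hQ, ← Finset.smul_sum]
  rw [← neg_mul, ← ofReal_neg, exp_mul_I, exp_mul_I, ← ofReal_cos, ← ofReal_sin, ← ofReal_cos,
    ← ofReal_sin, Real.cos_neg, Real.sin_neg, ofReal_neg]
  module

end Twist

section SelfSimilarity

variable {N : ℕ} [NeZero N] {Q : ℝ}

theorem sin_eq_zero_or_one_lt (hQ : exp (I * Q * N) = 1) : Real.sin Q = 0 ∨ 1 < N := by
  rcases (Nat.one_le_iff_ne_zero.mpr (NeZero.ne N)).eq_or_lt with hN | hN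
  · subst hN
    left
    simpa [mul_comm I, exp_ofReal_mul_I_im] using congrArg im hQ
  · exact Or.inr hN

-- For `N = 1` the two ends of the bond coincide and `J` no longer annihilates `|Ω⟩`.
theorem sin_smul_spinCurrent_mulVec_helix_zero (hQ : exp (I * Q * N) = 1) :
    ((Real.sin Q : ℂ) • spinCurrent N) *ᵥ helix N 0 = 0 := by
  rcases sin_eq_zero_or_one_lt hQ with h | h
  · simp [h]
  · rw [smul_mulVec, helix_zero, spinCurrent_mulVec_const h, smul_zero]

theorem star_helix_zero_vecMul_sin_smul_spinCurrent (hQ : exp (I * Q * N) = 1) :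
    star (helix N 0) ᵥ* ((Real.sin Q : ℂ) • spinCurrent N) = 0 := by
  rcases sin_eq_zero_or_one_lt hQ with h | h
  · simp [h]
  · rw [vecMul_smul, star_helix_zero, helix_zero, const_vecMul_spinCurrent h, smul_zero]

theorem untwist_Ut (hQ : exp (I * Q * N) = 1) (s : ℝ) :
    untwist N Q (Ut N s) = NormedSpace.exp ((I * ↑(s * Real.cos Q)) • Hxx N
      + (-(I * s)) • ((Real.sin Q : ℂ) • spinCurrent N)) := by
  rw [Ut, untwist_exp, map_smul, untwist_Hxx hQ]
  congr 1
  push_cast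
  module

theorem untwist_Ut_mulVec_helix_zero (hQ : exp (I * Q * N) = 1) (s : ℝ) :
    untwist N Q (Ut N s) *ᵥ helix N 0 = Ut N (s * Real.cos Q) *ᵥ helix N 0 := by
  rw [untwist_Ut hQ, exp_add_mulVec, Ut]
  · exact ((commute_Hxx_spinCurrent.smul_right _).smul_right _).smul_left _
  · rw [smul_mulVec, sin_smul_spinCurrent_mulVec_helix_zero hQ, smul_zero]

theorem star_helix_zero_vecMul_untwist_Ut (hQ : exp (I * Q * N) = 1) (s : ℝ) :
    star (helix N 0) ᵥ* untwist N Q (Ut N s) = star (helix N 0) ᵥ* Ut N (s * Real.cos Q) := by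
  rw [untwist_Ut hQ, vecMul_exp_add, Ut]
  · exact ((commute_Hxx_spinCurrent.smul_right _).smul_right _).smul_left _
  · rw [vecMul_smul, star_helix_zero_vecMul_sin_smul_spinCurrent hQ, smul_zero]

theorem expval_helix_evolved (hQ : exp (I * Q * N) = 1) (t : ℝ)
    (A : Matrix (Fin N → Fin 2) (Fin N → Fin 2) ℂ) :
    expval N (helix N Q) (Ut N t * A * Ut N (-t)) = expval N (helix N 0)
      (Ut N (t * Real.cos Q) * untwist N Q A * Ut N (-(t * Real.cos Q))) := by
  rw [expval, helix_eq_twist_mulVec Q, star_mulVec_dotProduct, ← untwist_apply, map_mul, map_mul,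
    expval]
  simp only [← mulVec_mulVec, untwist_Ut_mulVec_helix_zero hQ]
  rw [dotProduct_mulVec, star_helix_zero_vecMul_untwist_Ut hQ, ← dotProduct_mulVec, neg_mul]

end SelfSimilarity

section Translation

def siteTranslation (N : ℕ) [NeZero N] (c : Fin N) :
    Matrix (Fin N → Fin 2) (Fin N → Fin 2) ℂ ≃ₐ[ℂ] Matrix (Fin N → Fin 2) (Fin N → Fin 2) ℂ :=
  reindexAlgEquiv ℂ ℂ ((Equiv.addRight c).arrowCongr (Equiv.refl (Fin 2))).symm

variable {N : ℕ} [NeZero N]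

theorem siteTranslation_apply (c : Fin N) (A : Matrix (Fin N → Fin 2) (Fin N → Fin 2) ℂ) :
    siteTranslation N c A = A.submatrix ((Equiv.addRight c).arrowCongr (Equiv.refl (Fin 2)))
      ((Equiv.addRight c).arrowCongr (Equiv.refl (Fin 2))) := by
  simp [siteTranslation]

theorem siteTranslation_site (c : Fin N) (A : Matrix (Fin 2) (Fin 2) ℂ) (n : Fin N) :
    siteTranslation N c (site N A n) = site N A (n - c) := by
  simp [siteTranslation_apply, submatrix_site, sub_eq_add_neg]

theorem siteTranslation_Hxx (c : Fin N) : siteTranslation N c (Hxx N) = Hxx N := by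
  simp only [Hxx, map_sum, map_add, map_mul, siteTranslation_site, ← sub_add_eq_add_sub]
  exact Equiv.sum_comp (Equiv.subRight c) fun n => site N pX n * site N pX (n + 1)
    + site N pY n * site N pY (n + 1)

theorem siteTranslation_Ut (c : Fin N) (t : ℝ) : siteTranslation N c (Ut N t) = Ut N t := by
  rw [siteTranslation_apply, Ut, ← exp_submatrix, ← siteTranslation_apply, map_smul,
    siteTranslation_Hxx]

theorem expval_helix_zero_siteTranslation (c : Fin N)
    (A : Matrix (Fin N → Fin 2) (Fin N → Fin 2) ℂ) :
    expval N (helix N 0) (siteTranslation N c A) = expval N (helix N 0) A := by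
  rw [expval, expval, siteTranslation_apply, star_helix_zero, helix_zero]
  exact dotProduct_submatrix_mulVec _ A rfl rfl

theorem expval_helix_zero_evolved_site_pX (t : ℝ) (n : Fin N) :
    expval N (helix N 0) (Ut N t * site N pX n * Ut N (-t)) = SN N t := by
  rw [SN, ← expval_helix_zero_siteTranslation n, map_mul, map_mul, siteTranslation_Ut,
    siteTranslation_Ut, siteTranslation_site, sub_self]

end Translation

section SpinFlip

def spinFlip (N : ℕ) : Matrix (Fin N → Fin 2) (Fin N → Fin 2) ℂ := piKron fun _ => pX

variable {N : ℕ}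

theorem conjTranspose_spinFlip : (spinFlip N)ᴴ = spinFlip N := by
  simp [spinFlip, conjTranspose_piKron, conjTranspose_pX]

theorem spinFlip_mem_unitary :
    spinFlip N ∈ unitary (Matrix (Fin N → Fin 2) (Fin N → Fin 2) ℂ) := by
  rw [← unitaryGroup, mem_unitaryGroup_iff, star_eq_conjTranspose, conjTranspose_spinFlip,
    spinFlip, piKron_mul_piKron]
  simp only [Pi.mul_def, pX_mul_pX]
  exact piKron_one

def flipSpins (N : ℕ) :
    Matrix (Fin N → Fin 2) (Fin N → Fin 2) ℂ ≃⋆ₐ[ℂ] Matrix (Fin N → Fin 2) (Fin N → Fin 2) ℂ :=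
  Unitary.conjStarAlgAut ℂ _ ⟨spinFlip N, spinFlip_mem_unitary⟩

theorem flipSpins_apply (A : Matrix (Fin N → Fin 2) (Fin N → Fin 2) ℂ) :
    flipSpins N A = spinFlip N * A * spinFlip N := by
  simp [flipSpins, star_eq_conjTranspose, conjTranspose_spinFlip]

theorem flipSpins_site (A : Matrix (Fin 2) (Fin 2) ℂ) (n : Fin N) :
    flipSpins N (site N A n) = site N (pX * A * pX) n := by
  rw [flipSpins_apply]
  exact piKron_mul_site_mul_piKron (fun _ => pX_mul_pX) A n

variable [NeZero N]

theorem flipSpins_Hxx : flipSpins N (Hxx N) = Hxx N := by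
  simp only [Hxx, map_sum, map_add, map_mul, flipSpins_site, pX_mul_pX, one_mul,
    pX_mul_pY_mul_pX, site_neg, neg_mul_neg]

theorem flipSpins_Ut (t : ℝ) : flipSpins N (Ut N t) = Ut N t := by
  rw [Ut, flipSpins, conjStarAlgAut_exp, ← flipSpins, map_smul, flipSpins_Hxx]

theorem expval_helix_zero_evolved_site_pY (t : ℝ) (n : Fin N) :
    expval N (helix N 0) (Ut N t * site N pY n * Ut N (-t)) = 0 := by
  refine dotProduct_mulVec_eq_zero_of_conj_eq_neg (G := spinFlip N) ?_ ?_ ?_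
  · rw [star_helix_zero, helix_zero]
    exact const_vecMul_piKron (fun _ => sum_pX_apply_right) _
  · rw [conjTranspose_spinFlip, helix_zero]
    exact piKron_mulVec_const (fun _ => sum_pX_apply_left) _
  · rw [conjTranspose_spinFlip, ← flipSpins_apply, map_mul, map_mul, flipSpins_Ut, flipSpins_Ut,
      flipSpins_site, pX_mul_pY_mul_pX, site_neg, mul_neg, neg_mul]

end SpinFlip

/-- self-similarity of the helix decay: for any commensurate `Q`,
`⟨σ^x_n(t)⟩_Q = S_N(t cos Q) cos(Qn)` and `⟨σ^y_n(t)⟩_Q = S_N(t cos Q) sin(Qn)`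
(1-based site `n = j+1` for `j : Fin N`). -/
theorem stmt14 (N : ℕ) [NeZero N] (Q : ℝ)
    (hQ : Complex.exp (Complex.I * Q * N) = 1) (t : ℝ) (n : Fin N) :
    expval N (helix N Q) (Ut N t * site N pX n * Ut N (-t))
      = SN N (t * Real.cos Q) * (Real.cos (Q * ((n : ℕ) + 1)) : ℝ) ∧
    expval N (helix N Q) (Ut N t * site N pY n * Ut N (-t))
      = SN N (t * Real.cos Q) * (Real.sin (Q * ((n : ℕ) + 1)) : ℝ) := by
  have hX := expval_helix_zero_evolved_site_pX (t * Real.cos Q) n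
  have hY := expval_helix_zero_evolved_site_pY (t * Real.cos Q) n
  constructor
  · rw [expval_helix_evolved hQ, untwist_site_pX, mul_sub, sub_mul, mul_smul_comm, mul_smul_comm,
      smul_mul_assoc, smul_mul_assoc, expval_sub, expval_smul, expval_smul, hX, hY]
    ring
  · rw [expval_helix_evolved hQ, untwist_site_pY, mul_add, add_mul, mul_smul_comm, mul_smul_comm,
      smul_mul_assoc, smul_mul_assoc, expval_add, expval_smul, expval_smul, hX, hY]
    ring
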